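/- Assume (H1) and (H2), let S be a finite-dimensional linear subspace of L², let S_c ⊂ S be compact, and assume P(X ∈ S_c) = 1. Then: (i) for every x ∈ S one has Dp_h(x) ∈ S, and consequently any solution π of the gradient-flow initial value problem π'(t) = Dp_h(π(t)) with π(0) ∈ S satisfies π(t) ∈ S for all t ≥ 0; (ii) every nontrivial critical point of p_h (a point x with Dp_h(x) = 0 and p_h(x) > 0) belongs to S. -/

import Mathlib

open MeasureTheory ProbabilityTheory Real Set Filter
open scoped InnerProductSpace ENNReal NNReal Topology

noncomputable section

/-- Lebesgue measure restricted to the unit interval `[0,1]`. -/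
def μ01 : Measure ℝ := volume.restrict (Set.Icc (0:ℝ) 1)

/-- The space `L²([0,1])`. -/
abbrev L2 : Type := Lp ℝ 2 μ01

/-- `x'` is a weak derivative of `x`, i.e. `x t = ∫₀ᵗ x'(s) ds` for a.e. `t ∈ [0,1]`. -/
def IsWeakDeriv (x' x : L2) : Prop :=
  ∀ᵐ t ∂μ01, x t = ∫ s in Set.Ioc (0:ℝ) t, x' s

/-- Membership in `H¹₀([0,1])`. -/
def MemH10 (x : L2) : Prop := ∃ x' : L2, IsWeakDeriv x' x

/-- The rescaled kernel `K_h(t) = K(t/h)`. -/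
def Kh (K : ℝ → ℝ) (h : ℝ) : ℝ → ℝ := fun t => K (t / h)

/-- Assumption (H1) on the kernel `K : [0,∞) → [0,∞)`. -/
structure AssumpH1 (K : ℝ → ℝ) (h K0 K1 K2 K3 : ℝ) : Prop where
  contDiff : ContDiff ℝ 3 K
  nonneg : ∀ t : ℝ, 0 ≤ t → 0 ≤ K t
  bound0 : ∀ t : ℝ, 0 ≤ t → |Kh K h (t ^ 2)| ≤ K0
  bound1 : ∀ t : ℝ, 0 ≤ t → |deriv (Kh K h) (t ^ 2) * t| ≤ K1
  bound2 : ∀ t : ℝ, 0 ≤ t →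
    |deriv (Kh K h) (t ^ 2)| + |iteratedDeriv 2 (Kh K h) (t ^ 2) * t ^ 2| ≤ K2
  bound3 : ∀ t : ℝ, 0 ≤ t →
    |iteratedDeriv 2 (Kh K h) (t ^ 2) * t| + |iteratedDeriv 3 (Kh K h) (t ^ 2) * t ^ 3| ≤ K3

/-- Assumption (H2) on the kernel: `K'(t²) + K(t²) ≤ 0` for all `t ≥ 0`. -/
def AssumpH2 (K : ℝ → ℝ) : Prop := ∀ t : ℝ, 0 ≤ t → deriv K (t ^ 2) + K (t ^ 2) ≤ 0

/-- The pseudo-density `p_h(x) = E_P K_h(‖X − x‖²_{L²})`. -/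
def pseudoDensity {Ω : Type*} [MeasurableSpace Ω] (P : Measure Ω) (X : Ω → L2)
    (K : ℝ → ℝ) (h : ℝ) (x : L2) : ℝ :=
  ∫ ω, Kh K h (‖X ω - x‖ ^ 2) ∂P

/-- The L² gradient `Dp_h(x) = 2 E_P [K'_h(‖X − x‖²)(x − X)]`. -/
def pseudoGrad {Ω : Type*} [MeasurableSpace Ω] (P : Measure Ω) (X : Ω → L2)
    (K : ℝ → ℝ) (h : ℝ) (x : L2) : L2 :=
  (2 : ℝ) • ∫ ω, deriv (Kh K h) (‖X ω - x‖ ^ 2) • (x - X ω) ∂P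

/-! Since `X ∈ S` almost surely, `p_h` is invariant under the orthogonal reflection through `S`,
so its gradient at a point of `S` is fixed by that reflection, i.e. lies in `S`.
For the other two parts, differentiate `p_h` along the normal line `t ↦ s + t • v` with `s ∈ S`,
`v ∈ Sᗮ`: by Pythagoras `‖X - (s + t • v)‖² = ‖X - s‖² + t² ‖v‖²`, and (H2) in the form
`K_h' ≤ -K_h / h` gives `⟪Dp_h(y), v⟫ ≤ -(2 ‖v‖² / h) p_h(y)` when `v` is the normal component
of `y`. Hence the squared distance of a gradient-flow trajectory to `S` cannot increase, and a
critical point with `p_h > 0` has no normal component. -/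

section Projection

variable {E : Type*} [NormedAddCommGroup E] [InnerProductSpace ℝ E]
  (K : Submodule ℝ E) [K.HasOrthogonalProjection]

theorem HasGradientAt.mem_of_comp_reflection_eq [CompleteSpace E] {f : E → ℝ} {g x : E}
    (hg : HasGradientAt f g x) (hf : f ∘ K.reflection = f) (hx : x ∈ K) : g ∈ K := by
  have hgR : HasFDerivAt f ((InnerProductSpace.toDual ℝ E g).comp
      (K.reflection.toContinuousLinearEquiv : E →L[ℝ] E)) x := by
    have hg' : HasFDerivAt f (InnerProductSpace.toDual ℝ E g) (K.reflection x) := by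
      rw [K.reflection_mem_subspace_eq_self hx]; exact hg.hasFDerivAt
    rw [← hf]
    exact hg'.comp x K.reflection.toContinuousLinearEquiv.hasFDerivAt
  have hinner : ∀ w, ⟪K.reflection g, w⟫_ℝ = ⟪g, w⟫_ℝ := fun w => by
    have := congr($(hg.hasFDerivAt.unique hgR) w)
    simp only [ContinuousLinearMap.comp_apply, InnerProductSpace.toDual_apply_apply,
      ContinuousLinearEquiv.coe_coe, LinearIsometryEquiv.coe_toContinuousLinearEquiv] at this
    rw [this, ← K.reflection.inner_map_map, K.reflection_reflection]
  rw [← K.reflection_eq_self_iff]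
  exact ext_inner_right ℝ hinner

theorem mem_of_hasDerivWithinAt_of_inner_starProjection_orthogonal_nonpos {G : E → E}
    (hG : ∀ y, ⟪G y, Kᗮ.starProjection y⟫_ℝ ≤ 0) {γ : ℝ → E} (hγ₀ : γ 0 ∈ K)
    (hγ : ∀ t, 0 ≤ t → HasDerivWithinAt γ (G (γ t)) (Ici 0) t) {t : ℝ} (ht : 0 ≤ t) :
    γ t ∈ K := by
  set Q := Kᗮ.starProjection
  have hderiv : ∀ u, 0 ≤ u →
      HasDerivWithinAt (fun u => ‖Q (γ u)‖ ^ 2) (2 * ⟪Q (γ u), Q (G (γ u))⟫_ℝ) (Ici 0) u :=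
    fun u hu => (Q.hasFDerivAt.comp_hasDerivWithinAt u (hγ u hu)).norm_sq
  have hdecr : ∀ u, 2 * ⟪Q (γ u), Q (G (γ u))⟫_ℝ ≤ 0 := fun u => by
    rw [← Kᗮ.inner_starProjection_left_eq_right,
      Kᗮ.starProjection_eq_self_iff.mpr (Kᗮ.starProjection_apply_mem _), real_inner_comm]
    linarith [hG (γ u)]
  have hzero : ‖Q (γ t)‖ ^ 2 ≤ 0 := by
    refine image_le_of_deriv_right_le_deriv_boundary (B := fun _ => 0) (B' := fun _ => 0)
      (fun u hu => (hderiv u hu.1).continuousWithinAt.mono Icc_subset_Ici_self)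
      (fun u hu => (hderiv u hu.1).mono (Ici_subset_Ici.mpr hu.1)) ?_ continuousOn_const
      (fun u _ => hasDerivWithinAt_const _ _ _) (fun u _ => hdecr u) ⟨ht, le_rfl⟩
    simp [Q, Submodule.starProjection_eq_self_iff.mpr hγ₀]
  have hQ : Q (γ t) = 0 := by simpa using hzero
  rwa [Submodule.starProjection_apply_eq_zero_iff, Submodule.orthogonal_orthogonal] at hQ

end Projection

theorem hasDerivAt_integral_comp_add_sq_mul {Ω : Type*} [MeasurableSpace Ω] {P : Measure Ω}
    [IsFiniteMeasure P] {k : ℝ → ℝ} (hk : Differentiable ℝ k) {C : ℝ}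
    (hC : ∀ u, 0 ≤ u → |deriv k u| ≤ C) {a : Ω → ℝ} (ha : AEStronglyMeasurable a P)
    (ha₀ : ∀ ω, 0 ≤ a ω) {c : ℝ} (hc : 0 ≤ c) {t₀ : ℝ}
    (hint : Integrable (fun ω => k (a ω + t₀ ^ 2 * c)) P) :
    HasDerivAt (fun t => ∫ ω, k (a ω + t ^ 2 * c) ∂P)
      ((∫ ω, deriv k (a ω + t₀ ^ 2 * c) ∂P) * (2 * t₀ * c)) t₀ := by
  have hmeas : ∀ t, AEStronglyMeasurable (fun ω => a ω + t ^ 2 * c) P :=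
    fun t => ha.add aestronglyMeasurable_const
  have hbound : ∀ ω, ∀ t ∈ Metric.ball t₀ 1,
      ‖deriv k (a ω + t ^ 2 * c) * (2 * t * c)‖ ≤ C * (2 * (|t₀| + 1) * c) := by
    intro ω t ht
    have ht' : |t| ≤ |t₀| + 1 := by
      have := abs_sub_abs_le_abs_sub t t₀
      rw [Metric.mem_ball, Real.dist_eq] at ht
      linarith
    rw [Real.norm_eq_abs, abs_mul, abs_mul, abs_mul, abs_two, abs_of_nonneg hc]
    gcongr
    · exact (abs_nonneg _).trans (hC 0 le_rfl)
    · exact hC _ (add_nonneg (ha₀ ω) (by positivity))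
  rw [← integral_mul_const]
  refine (hasDerivAt_integral_of_dominated_loc_of_deriv_le (Metric.ball_mem_nhds t₀ one_pos)
    (Eventually.of_forall fun t => hk.continuous.comp_aestronglyMeasurable (hmeas t)) hint
    (((measurable_deriv k).comp_aemeasurable (hmeas t₀).aemeasurable).aestronglyMeasurable.mul
      aestronglyMeasurable_const)
    (Eventually.of_forall hbound) (integrable_const _)
    (Eventually.of_forall fun ω t _ => ?_)).2
  have hline : HasDerivAt (fun t => a ω + t ^ 2 * c) (2 * t * c) t := by
    simpa using ((hasDerivAt_pow 2 t).mul_const c).const_add (a ω)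
  exact (hk _).hasDerivAt.comp t hline

theorem deriv_Kh (K : ℝ → ℝ) (h u : ℝ) : deriv (Kh K h) u = deriv K (u / h) / h := by
  have hKh : Kh K h = fun t => K (h⁻¹ * t) := by
    funext t; rw [Kh, div_eq_inv_mul]
  rw [hKh, deriv_comp_mul_left, smul_eq_mul, div_eq_inv_mul, div_eq_inv_mul]

theorem AssumpH2.deriv_Kh_le {K : ℝ → ℝ} (hK : AssumpH2 K) {h : ℝ} (hh : 0 < h) {u : ℝ}
    (hu : 0 ≤ u) : deriv (Kh K h) u ≤ -Kh K h u / h := by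
  have hKu := hK √(u / h) (sqrt_nonneg _)
  rw [sq_sqrt (by positivity)] at hKu
  rw [deriv_Kh, Kh]
  gcongr
  linarith

namespace AssumpH1

variable {K : ℝ → ℝ} {h K0 K1 K2 K3 : ℝ} (hK : AssumpH1 K h K0 K1 K2 K3)
include hK

theorem differentiable_Kh : Differentiable ℝ (Kh K h) :=
  (hK.contDiff.comp (contDiff_id.div_const h)).differentiable (by norm_num)

theorem abs_deriv_Kh_le {u : ℝ} (hu : 0 ≤ u) : |deriv (Kh K h) u| ≤ K2 := by
  have := hK.bound2 √u (sqrt_nonneg u)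
  rw [sq_sqrt hu] at this
  linarith [abs_nonneg (iteratedDeriv 2 (Kh K h) u * u)]

theorem integrable_Kh_comp {Ω : Type*} [MeasurableSpace Ω] {P : Measure Ω} [IsFiniteMeasure P]
    {a : Ω → ℝ} (ha : AEStronglyMeasurable a P) (ha₀ : ∀ ω, 0 ≤ a ω) :
    Integrable (fun ω => Kh K h (a ω)) P := by
  refine (integrable_const K0).mono' (hK.differentiable_Kh.continuous.comp_aestronglyMeasurable ha)
    (Eventually.of_forall fun ω => ?_)
  have := hK.bound0 √(a ω) (sqrt_nonneg _)
  rwa [sq_sqrt (ha₀ ω)] at this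

theorem integrable_deriv_Kh_comp {Ω : Type*} [MeasurableSpace Ω] {P : Measure Ω}
    [IsFiniteMeasure P] {a : Ω → ℝ} (ha : AEStronglyMeasurable a P) (ha₀ : ∀ ω, 0 ≤ a ω) :
    Integrable (fun ω => deriv (Kh K h) (a ω)) P :=
  (integrable_const K2).mono'
    ((measurable_deriv _).comp_aemeasurable ha.aemeasurable).aestronglyMeasurable
    (Eventually.of_forall fun ω => hK.abs_deriv_Kh_le (ha₀ ω))

end AssumpH1

section PseudoDensity

variable {Ω : Type*} [MeasurableSpace Ω] {P : Measure Ω} {X : Ω → L2} {K : ℝ → ℝ} {h : ℝ}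

theorem pseudoDensity_nonneg (hK : ∀ t, 0 ≤ t → 0 ≤ K t) (hh : 0 ≤ h) (x : L2) :
    0 ≤ pseudoDensity P X K h x :=
  integral_nonneg fun _ => hK _ (by positivity)

variable {S : Submodule ℝ L2}

theorem pseudoDensity_comp_reflection [S.HasOrthogonalProjection] (hXS : ∀ᵐ ω ∂P, X ω ∈ S) :
    pseudoDensity P X K h ∘ S.reflection = pseudoDensity P X K h := by
  funext x
  refine integral_congr_ae (hXS.mono fun ω hω => ?_)
  dsimp only
  rw [← S.reflection_mem_subspace_eq_self hω, ← map_sub, LinearIsometryEquiv.norm_map,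
    S.reflection_mem_subspace_eq_self hω]

theorem pseudoDensity_add_smul_of_mem_orthogonal (hXS : ∀ᵐ ω ∂P, X ω ∈ S) {s v : L2}
    (hs : s ∈ S) (hv : v ∈ Sᗮ) (t : ℝ) :
    pseudoDensity P X K h (s + t • v) = ∫ ω, Kh K h (‖X ω - s‖ ^ 2 + t ^ 2 * ‖v‖ ^ 2) ∂P := by
  refine integral_congr_ae (hXS.mono fun ω hω => ?_)
  have horth : ⟪X ω - s, t • v⟫_ℝ = 0 :=
    S.inner_right_of_mem_orthogonal (S.sub_mem hω hs) (Sᗮ.smul_mem t hv)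
  dsimp only
  rw [← sub_sub, norm_sub_sq_real, horth, norm_smul, mul_pow, Real.norm_eq_abs, sq_abs]
  ring_nf

theorem inner_starProjection_orthogonal_le_of_hasGradientAt [IsFiniteMeasure P]
    [S.HasOrthogonalProjection] {K0 K1 K2 K3 : ℝ} (hK : AssumpH1 K h K0 K1 K2 K3)
    (hK' : AssumpH2 K) (hh : 0 < h) (hX : AEStronglyMeasurable X P) (hXS : ∀ᵐ ω ∂P, X ω ∈ S)
    {g y : L2} (hg : HasGradientAt (pseudoDensity P X K h) g y) :
    ⟪g, Sᗮ.starProjection y⟫_ℝ ≤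
      -(2 * ‖Sᗮ.starProjection y‖ ^ 2 / h) * pseudoDensity P X K h y := by
  set s := S.starProjection y
  set v := Sᗮ.starProjection y
  have hy : s + (1 : ℝ) • v = y := by simp [s, v]
  have hline := pseudoDensity_add_smul_of_mem_orthogonal (K := K) (h := h) hXS
    (S.starProjection_apply_mem y) (Sᗮ.starProjection_apply_mem y)
  have ha : AEStronglyMeasurable (fun ω => ‖X ω - s‖ ^ 2) P :=
    (hX.sub aestronglyMeasurable_const).norm.pow 2
  have ha₀ : ∀ ω, 0 ≤ ‖X ω - s‖ ^ 2 + (1 : ℝ) ^ 2 * ‖v‖ ^ 2 := fun ω => by positivity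
  have hgrad : HasDerivAt (fun t : ℝ => pseudoDensity P X K h (s + t • v)) ⟪g, v⟫_ℝ 1 := by
    rw [← hy] at hg
    have := hg.hasFDerivAt.comp_hasDerivAt (1 : ℝ)
      (((hasDerivAt_id (1 : ℝ)).smul_const v).const_add s)
    simp only [id_eq, one_smul, InnerProductSpace.toDual_apply_apply] at this
    exact this
  have hintegral := hasDerivAt_integral_comp_add_sq_mul hK.differentiable_Kh
    (fun _ => hK.abs_deriv_Kh_le) ha (fun _ => sq_nonneg _) (sq_nonneg ‖v‖)
    (hK.integrable_Kh_comp (ha.add aestronglyMeasurable_const) ha₀)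
  rw [← funext hline] at hintegral
  have hmono : ∫ ω, deriv (Kh K h) (‖X ω - s‖ ^ 2 + (1 : ℝ) ^ 2 * ‖v‖ ^ 2) ∂P ≤
      -pseudoDensity P X K h y / h := by
    rw [← hy, hline, ← integral_neg, ← integral_div]
    exact integral_mono (hK.integrable_deriv_Kh_comp (ha.add aestronglyMeasurable_const) ha₀)
      ((hK.integrable_Kh_comp (ha.add aestronglyMeasurable_const) ha₀).neg.div_const h)
      fun ω => hK'.deriv_Kh_le hh (ha₀ ω)
  calc ⟪g, v⟫_ℝ
      = (∫ ω, deriv (Kh K h) (‖X ω - s‖ ^ 2 + (1 : ℝ) ^ 2 * ‖v‖ ^ 2) ∂P) * (2 * 1 * ‖v‖ ^ 2) :=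
        hgrad.unique hintegral
    _ ≤ (-pseudoDensity P X K h y / h) * (2 * 1 * ‖v‖ ^ 2) := by gcongr
    _ = -(2 * ‖v‖ ^ 2 / h) * pseudoDensity P X K h y := by ring

end PseudoDensity

theorem statement10_general
    {Ω : Type*} [MeasurableSpace Ω] (P : Measure Ω) [IsProbabilityMeasure P]
    (X : Ω → L2) (K : ℝ → ℝ) (h K0 K1 K2 K3 : ℝ) (hh : 0 < h)
    (hH1 : AssumpH1 K h K0 K1 K2 K3)
    (hH2 : AssumpH2 K)
    (hXmeas : AEStronglyMeasurable X P)
    (S : Submodule ℝ L2) (hS : FiniteDimensional ℝ S)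
    (Sc : Set L2) (hScS : Sc ⊆ (S : Set L2))
    (hXSc : ∀ᵐ ω ∂P, X ω ∈ Sc)
    (G : L2 → L2)
    (hG : ∀ y : L2, HasGradientAt (pseudoDensity P X K h) (G y) y) :
    (∀ x : L2, x ∈ S → G x ∈ S) ∧
    (∀ γ : ℝ → L2, γ 0 ∈ S →
      (∀ t : ℝ, 0 ≤ t → HasDerivWithinAt γ (G (γ t)) (Set.Ici 0) t) →
      ∀ t : ℝ, 0 ≤ t → γ t ∈ S) ∧
    (∀ x : L2, G x = 0 → 0 < pseudoDensity P X K h x → x ∈ S) := by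
  have hXS : ∀ᵐ ω ∂P, X ω ∈ S := hXSc.mono fun ω hω => hScS hω
  have key := fun y =>
    inner_starProjection_orthogonal_le_of_hasGradientAt hH1 hH2 hh hXmeas hXS (hG y)
  have hdecr : ∀ y, ⟪G y, Sᗮ.starProjection y⟫_ℝ ≤ 0 := fun y =>
    (key y).trans (mul_nonpos_of_nonpos_of_nonneg (neg_nonpos.mpr (by positivity))
      (pseudoDensity_nonneg hH1.nonneg hh.le y))
  refine ⟨fun x hx => (hG x).mem_of_comp_reflection_eq S (pseudoDensity_comp_reflection hXS) hx,
    fun γ hγ₀ hγ t ht =>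
      mem_of_hasDerivWithinAt_of_inner_starProjection_orthogonal_nonpos S hdecr hγ₀ hγ ht,
    fun x hGx hpx => ?_⟩
  have hx := key x
  rw [hGx, inner_zero_left] at hx
  have hv' : Sᗮ.starProjection x = 0 := by
    by_contra hv
    have : 0 < 2 * ‖Sᗮ.starProjection x‖ ^ 2 / h * pseudoDensity P X K h x := by positivity
    linarith
  rwa [Submodule.starProjection_apply_eq_zero_iff, Submodule.orthogonal_orthogonal] at hv'

/-- Lemma 5 of the paper. Under (H1) and (H2), if `S` is a
finite-dimensional subspace of `L²`, `Sc ⊆ S` is compact and `P(X ∈ Sc) = 1`, then: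
(i) `Dp_h(x) ∈ S` for all `x ∈ S`, hence any solution of the gradient flow started in `S`
stays in `S`; (ii) every nontrivial critical point of `p_h` belongs to `S`. -/
theorem statement10
    {Ω : Type*} [MeasurableSpace Ω] (P : Measure Ω) [IsProbabilityMeasure P]
    (X : Ω → L2) (K : ℝ → ℝ) (h K0 K1 K2 K3 : ℝ) (hh : 0 < h)
    (hH1 : AssumpH1 K h K0 K1 K2 K3)
    (hH2 : AssumpH2 K)
    (hXmeas : AEStronglyMeasurable X P)
    (S : Submodule ℝ L2) (hS : FiniteDimensional ℝ S)
    (Sc : Set L2) (hScS : Sc ⊆ (S : Set L2)) (hScComp : IsCompact Sc)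
    (hXSc : ∀ᵐ ω ∂P, X ω ∈ Sc)
    (G : L2 → L2)
    (hG : ∀ y : L2, HasGradientAt (pseudoDensity P X K h) (G y) y) :
    (∀ x : L2, x ∈ S → G x ∈ S) ∧
    (∀ γ : ℝ → L2, γ 0 ∈ S →
      (∀ t : ℝ, 0 ≤ t → HasDerivWithinAt γ (G (γ t)) (Set.Ici 0) t) →
      ∀ t : ℝ, 0 ≤ t → γ t ∈ S) ∧
    (∀ x : L2, G x = 0 → 0 < pseudoDensity P X K h x → x ∈ S) :=
  statement10_general P X K h K0 K1 K2 K3 hh hH1 hH2 hXmeas S hS Sc hScS hXSc G hG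

end
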